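/- Let X be a heap, f an idempotent heap endomorphism of X with kernel ω and image Y, e ∈ Y, and K = [e]_ω. Then Y is a normal subheap of X if and only if [y,e,k] = [k,e,y] for every y ∈ Y and k ∈ K. -/

import Mathlib

/-!
With `e` as identity, `x * y := [x,e,y]` makes `X` a group in which `f` is an idempotent
endomorphism, `Y` a subgroup and `K` its kernel, and every `x` factors as `x = [k,e,f x]`
with `k = [x,f x,e] ∈ K`. If `Y` is normal, then for `y ∈ Y`, `k ∈ K` the element
`[[k,e,y],k,e]` lies in `Y` and is mapped by `f` to `y`, hence equals `y`, which is the
commutation `[y,e,k] = [k,e,y]`. Conversely, if `K` and `Y` commute, the normality expression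
`[[x,a,s],x,a]` for `x = [k,e,f x]` does not see `k`, so it equals `[[f x,a,s],f x,a] ∈ Y`.
-/

/-- A heap: a set with an associative Mal'tsev ternary operation. -/
structure Heap (X : Type*) where
  op : X → X → X → X
  mal1 : ∀ x y, op x x y = y
  mal2 : ∀ x y, op x y y = x
  assoc : ∀ x y z w u, op (op x y z) w u = op x y (op z w u)

theorem Function.apply_eq_self_of_comp_self_of_mem_range {X : Type*} {f : X → X}
    (hf : f ∘ f = f) {y : X} (hy : y ∈ Set.range f) : f y = y := by
  obtain ⟨z, rfl⟩ := hy
  exact congrFun hf z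

namespace Heap

variable {X : Type*} (H : Heap X)

def conj (x a s : X) : X := H.op (H.op x a s) x a

def IsNormalSubheap (S : Set X) : Prop :=
  S.Nonempty ∧ ∀ x, ∀ a ∈ S, ∀ s ∈ S, H.conj x a s ∈ S

theorem op_op_cancel_left (a b t : X) : H.op a b (H.op b a t) = t := by
  rw [← H.assoc, H.mal2, H.mal1]

theorem op_op_cancel_right (t a b : X) : H.op (H.op t a b) b a = t := by
  rw [H.assoc, H.mal1, H.mal2]

theorem op_op_middle (x z w v u : X) : H.op x (H.op z w v) u = H.op x v (H.op w z u) := by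
  have hu : H.op (H.op z w v) v (H.op w z u) = u := by
    rw [H.assoc, H.mal1, op_op_cancel_left]
  calc H.op x (H.op z w v) u
      = H.op x v (H.op v (H.op z w v) (H.op (H.op z w v) v (H.op w z u))) := by
        rw [hu, ← H.assoc, H.mal2]
    _ = H.op x v (H.op w z u) := by rw [op_op_cancel_left]

theorem conj_op_eq (k e y a s : X) :
    H.conj (H.op k e y) a s = H.op (H.op k e (H.op (H.op y a s) y e)) k a := by
  rw [conj, H.assoc k e y a s, H.assoc k e, op_op_middle, ← H.assoc (H.op y a s) y e,
    ← H.assoc]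

theorem conj_op_eq_of_commute {k e y a s : X}
    (h : H.op k e (H.op (H.op y a s) y e) = H.op (H.op (H.op y a s) y e) e k) :
    H.conj (H.op k e y) a s = H.conj y a s := by
  rw [conj_op_eq, h, H.assoc, H.mal1, H.assoc, H.mal1, conj]

section Endomorphism

variable {H} {f : X → X} (hf : ∀ x y z, f (H.op x y z) = H.op (f x) (f y) (f z))
include hf

theorem map_conj (x a s : X) : f (H.conj x a s) = H.conj (f x) (f a) (f s) := by
  rw [conj, conj, hf, hf]

theorem op_mem_range {a b c : X} (ha : a ∈ Set.range f) (hb : b ∈ Set.range f)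
    (hc : c ∈ Set.range f) : H.op a b c ∈ Set.range f := by
  obtain ⟨a, rfl⟩ := ha
  obtain ⟨b, rfl⟩ := hb
  obtain ⟨c, rfl⟩ := hc
  exact ⟨H.op a b c, hf a b c⟩

variable (hf_idem : f ∘ f = f) {e : X} (he : e ∈ Set.range f)
include hf_idem he

theorem op_eq_op_of_isNormalSubheap_range (hN : H.IsNormalSubheap (Set.range f))
    {y k : X} (hy : y ∈ Set.range f) (hk : f k = f e) : H.op y e k = H.op k e y := by
  have hfix : ∀ z ∈ Set.range f, f z = z :=
    fun _ => Function.apply_eq_self_of_comp_self_of_mem_range hf_idem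
  have hconj : H.conj k e y = y := by
    rw [← hfix _ (hN.2 k e he y hy), map_conj hf, hk, hfix e he, hfix y hy, conj,
      H.mal1, H.mal2]
  calc H.op y e k = H.op (H.conj k e y) e k := by rw [hconj]
    _ = H.op k e y := op_op_cancel_right H _ _ _

theorem isNormalSubheap_range_of_commute
    (hcomm : ∀ y ∈ Set.range f, ∀ k, f k = f e → H.op y e k = H.op k e y) :
    H.IsNormalSubheap (Set.range f) := by
  have hfix : ∀ z ∈ Set.range f, f z = z :=
    fun _ => Function.apply_eq_self_of_comp_self_of_mem_range hf_idem
  refine ⟨⟨e, he⟩, fun x a ha s hs => ?_⟩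
  have hfx : f x ∈ Set.range f := ⟨x, rfl⟩
  set k := H.op x (f x) e
  have hk : f k = f e := by rw [hf, hfix _ hfx, H.mal1]
  have hx : H.op k e (f x) = x := op_op_cancel_right H x (f x) e
  have hp : H.op (f x) a s ∈ Set.range f := op_mem_range hf hfx ha hs
  rw [← hx, conj_op_eq_of_commute H (hcomm _ (op_mem_range hf hp hfx he) k hk).symm]
  exact op_mem_range hf hp hfx ha

end Endomorphism

end Heap

/-- Let `X` be a heap, `f` an idempotent heap endomorphism with kernel
`ω = {(x,y) : f x = f y}` and image `Y = f(X)`, `e ∈ Y`, and `K = [e]_ω`. Then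
`Y` is a normal subheap of `X` (nonempty and `[[x,a,s],x,a] ∈ Y` for all `x ∈ X`
and `a, s ∈ Y`) if and only if `[y,e,k] = [k,e,y]` for every `y ∈ Y`, `k ∈ K`. -/
theorem stmt19 {X : Type*} (H : Heap X) (f : X → X)
    (hf_endo : ∀ x y z, f (H.op x y z) = H.op (f x) (f y) (f z))
    (hf_idem : f ∘ f = f)
    (e : X) (he : e ∈ Set.range f) :
    ((Set.range f).Nonempty ∧
        ∀ x : X, ∀ a ∈ Set.range f, ∀ s ∈ Set.range f,
          H.op (H.op x a s) x a ∈ Set.range f)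
      ↔ (∀ y ∈ Set.range f, ∀ k ∈ {x | f x = f e}, H.op y e k = H.op k e y) :=
  ⟨fun hN _ hy _ hk => Heap.op_eq_op_of_isNormalSubheap_range hf_endo hf_idem he hN hy hk,
    Heap.isNormalSubheap_range_of_commute hf_endo hf_idem he⟩
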